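/- The intersection F_19 ∩ C is nonempty; that is, there exists a point of the ternary Cantor set whose continued fraction partial quotients are all at most 19. -/

import Mathlib

/-!
We build `x` in the Cantor set with `1 / (20 q²) < |x - p / q|` for all fractions `p / q`. For
the convergent `P / Q` of index `k` one has `|x - P / Q| ≤ y / Q²` with `y = gaussMap^[k] x`,
so `1 / 20 < y` and every partial quotient `⌊1 / y⌋` is at most `19`.

The digits are chosen greedily: at level `k` the triadic interval `[u, u + 3⁻ᵏ]` avoids the
`1 / (20 q²)`-neighbourhoods of all `p / q` with `10 q² ≤ 3 ^ (k + 1)`. A denominator that is new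
at level `k + 1` satisfies `3 ^ (k + 1) < 10 q² < 3 ^ (k + 2)` (equality is excluded by parity), so
its neighbourhood is shorter than a child interval and cannot meet both children. Two new
fractions `p / q < p' / q'` meeting one child each would give
`1 / (q q') ≤ p' / q' - p / q ≤ 3⁻ᵏ + 1 / (20 q²) + 1 / (20 q'²)`, which is impossible in that
range of `q, q'`; so one of the two children avoids all of them.
-/

/-- The Gauss map `x ↦ {1/x}`. -/
noncomputable def gaussMap (x : ℝ) : ℝ := Int.fract (1 / x)

/-- `Fset n` is the set of irrational numbers in `(0,1)` all of whose continued
fraction partial quotients are at most `n`. -/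
noncomputable def Fset (n : ℕ) : Set ℝ :=
  {x | Irrational x ∧ x ∈ Set.Ioo (0 : ℝ) 1 ∧
    ∀ k : ℕ, ⌊1 / (gaussMap^[k] x)⌋ ≤ (n : ℤ)}

/-- The ternary Cantor set `{∑ 2bₙ 3^{-(n+1)} : b : ℕ → {0,1}}`. -/
noncomputable def ternaryCantor : Set ℝ :=
  {x | ∃ b : ℕ → Bool, x = ∑' n : ℕ, (if b n then (2 : ℝ) else 0) / 3 ^ (n + 1)}

open Set Real

def BadlyApproximable (c x : ℝ) : Prop :=
  ∀ p q : ℤ, 0 < q → c / q ^ 2 < |x - p / q|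

theorem BadlyApproximable.irrational {c x : ℝ} (h : BadlyApproximable c x) (hc : 0 ≤ c) :
    Irrational x := by
  rintro ⟨r, rfl⟩
  have := h r.num r.den (by exact_mod_cast r.pos)
  rw [Int.cast_natCast, ← Rat.cast_def, sub_self, abs_zero] at this
  exact this.not_ge (by positivity)

theorem Irrational.gaussMap_iterate {x : ℝ} (hx : Irrational x) (k : ℕ) :
    Irrational (gaussMap^[k] x) := by
  induction k with
  | zero => exact hx
  | succ k ih =>
    rw [Function.iterate_succ_apply', gaussMap, Int.fract, one_div]
    exact ih.inv.sub_intCast _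

theorem gaussMap_iterate_mem_Ioo {x : ℝ} (hx : Irrational x) (hx01 : x ∈ Ioo 0 1) :
    ∀ k, gaussMap^[k] x ∈ Ioo 0 1
  | 0 => hx01
  | k + 1 => by
    rw [Function.iterate_succ_apply', gaussMap, one_div]
    exact ⟨Int.fract_pos.mpr ((hx.gaussMap_iterate k).inv.ne_int _), Int.fract_lt_one _⟩

theorem mul_floor_add_gaussMap {y : ℝ} (hy : y ≠ 0) : y * (⌊1 / y⌋ + gaussMap y) = 1 := by
  rw [gaussMap, Int.floor_add_fract, mul_one_div_cancel hy]

/-- `P / Q` and `P' / Q'` are the `k`-th and `(k-1)`-th convergents of `x`. -/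
theorem exists_mobius_gaussMap_iterate {x : ℝ} (hx : ∀ k, gaussMap^[k] x ∈ Ioo 0 1) (k : ℕ) :
    ∃ P Q P' Q' : ℤ, 0 < Q ∧ 0 ≤ Q' ∧ |P' * Q - P * Q'| = 1 ∧
      x * (Q + gaussMap^[k] x * Q') = P + gaussMap^[k] x * P' := by
  induction k with
  | zero => exact ⟨0, 1, 1, 0, by simp⟩
  | succ k ih =>
    obtain ⟨P, Q, P', Q', hQ, hQ', hdet, hxy⟩ := ih
    obtain ⟨hy0, hy1⟩ := hx k
    set y := gaussMap^[k] x
    set a := ⌊1 / y⌋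
    have ha : 1 ≤ a := Int.le_floor.mpr (by simpa using one_le_one_div hy0 hy1.le)
    have hstep := mul_floor_add_gaussMap hy0.ne'
    refine ⟨a * P + P', a * Q + Q', P, Q, by nlinarith, hQ.le, ?_, ?_⟩
    · rw [← hdet, ← abs_neg]; ring_nf
    · rw [Function.iterate_succ_apply']
      push_cast
      linear_combination (a + gaussMap y) * hxy - (x * Q' - P') * hstep

theorem abs_sub_div_le_of_mul_add_eq {x y : ℝ} {P Q P' Q' : ℤ} (hQ : 0 < Q) (hQ' : 0 ≤ Q')
    (hy : 0 ≤ y) (hdet : |P' * Q - P * Q'| = 1) (hx : x * (Q + y * Q') = P + y * P') :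
    |x - P / Q| ≤ y / Q ^ 2 := by
  have hQR : (0 : ℝ) < Q := by exact_mod_cast hQ
  have hden : (Q : ℝ) ≤ Q + y * Q' := le_add_of_nonneg_right (by positivity)
  have hdetR : |(P' * Q - P * Q' : ℝ)| = 1 := by exact_mod_cast hdet
  have hdiff : x - P / Q = y * (P' * Q - P * Q') / (Q * (Q + y * Q')) := by
    rw [eq_div_iff (by positivity)]
    field_simp
    linear_combination (Q : ℝ) * hx
  rw [hdiff, abs_div, abs_mul, hdetR, abs_of_nonneg hy, mul_one,
    abs_of_pos (by positivity), sq]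
  gcongr

theorem BadlyApproximable.lt_gaussMap_iterate {c x : ℝ} (h : BadlyApproximable c x)
    (hirr : Irrational x) (hx : x ∈ Ioo 0 1) (k : ℕ) : c < gaussMap^[k] x := by
  have horbit := gaussMap_iterate_mem_Ioo hirr hx
  obtain ⟨P, Q, P', Q', hQ, hQ', hdet, hxy⟩ := exists_mobius_gaussMap_iterate horbit k
  have hle := abs_sub_div_le_of_mul_add_eq hQ hQ' (horbit k).1.le hdet hxy
  have hQ2 : (0 : ℝ) < (Q : ℝ) ^ 2 := by positivity
  exact (div_lt_div_iff_of_pos_right hQ2).mp ((h P Q hQ).trans_le hle)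

theorem ofDigits_mem_Icc_sum {b : ℕ} (a : ℕ → Fin b) (n : ℕ) :
    ofDigits a ∈ Icc (∑ i ∈ Finset.range n, ofDigitsTerm a i)
      (∑ i ∈ Finset.range n, ofDigitsTerm a i + ((b : ℝ) ^ n)⁻¹) := by
  rw [ofDigits_eq_sum_add_ofDigits a n]
  constructor
  · exact le_add_of_nonneg_right (mul_nonneg (by positivity) (ofDigits_nonneg _))
  · exact add_le_add_right (mul_le_of_le_one_right (by positivity) (ofDigits_le_one _)) _

noncomputable def ternaryTerm (d : Bool) (n : ℕ) : ℝ := (if d then 2 else 0) / 3 ^ (n + 1)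

theorem ofDigitsTerm_cond_two_zero (b : ℕ → Bool) (n : ℕ) :
    ofDigitsTerm (fun i => cond (b i) (2 : Fin 3) 0) n = ternaryTerm (b n) n := by
  cases hb : b n <;> simp [ofDigitsTerm, ternaryTerm, hb, div_eq_mul_inv]

theorem ofDigits_cond_mem_ternaryCantor (b : ℕ → Bool) :
    ofDigits (fun i => cond (b i) (2 : Fin 3) 0) ∈ ternaryCantor :=
  ⟨b, tsum_congr (ofDigitsTerm_cond_two_zero b)⟩

theorem ternaryCantor_subset_Icc : ternaryCantor ⊆ Icc 0 1 := by
  rintro _ ⟨b, rfl⟩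
  change ∑' n, ternaryTerm (b n) n ∈ _
  rw [← tsum_congr (ofDigitsTerm_cond_two_zero b)]
  exact ⟨ofDigits_nonneg _, ofDigits_le_one _⟩

def Avoids (k : ℕ) (u : ℝ) : Prop :=
  ∀ p q : ℤ, 0 < q → 10 * q ^ 2 ≤ 3 ^ (k + 1) →
    ∀ y ∈ Icc u (u + 1 / 3 ^ k), 1 / (20 * q ^ 2) < |y - p / q|

theorem avoids_zero (u : ℝ) : Avoids 0 u := by
  intro p q hq hq3
  norm_num at hq3
  nlinarith

theorem ten_mul_sq_ne_three_pow (q : ℤ) (n : ℕ) : 10 * q ^ 2 ≠ 3 ^ n := by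
  intro h
  have heven : Even ((3 : ℤ) ^ n) := h ▸ ⟨5 * q ^ 2, by ring⟩
  exact Int.not_even_iff_odd.mpr (Odd.pow (by decide)) heven

theorem one_div_mul_le_abs_div_sub_div {p q p' q' : ℤ} (hq : 0 < q) (hq' : 0 < q')
    (hne : (p / q : ℝ) ≠ p' / q') : 1 / (q * q' : ℝ) ≤ |(p / q : ℝ) - p' / q'| := by
  have hqR : (0 : ℝ) < q := by exact_mod_cast hq
  have hq'R : (0 : ℝ) < q' := by exact_mod_cast hq'
  have hnum : p * q' - q * p' ≠ 0 := by
    contrapose! hne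
    rw [div_eq_div_iff hqR.ne' hq'R.ne']
    have hR : (p * q' - q * p' : ℝ) = 0 := by exact_mod_cast hne
    linear_combination hR
  rw [div_sub_div _ _ hqR.ne' hq'R.ne', abs_div, abs_of_pos (mul_pos hqR hq'R)]
  gcongr
  exact_mod_cast Int.one_le_abs hnum

theorem three_div_add_lt_one_div_mul {K s t : ℝ} (hs0 : 0 < s) (ht0 : 0 < t)
    (hs : K < 10 * s ^ 2) (hs' : 10 * s ^ 2 < 3 * K) (ht : K < 10 * t ^ 2)
    (ht' : 10 * t ^ 2 < 3 * K) :
    3 / K + 1 / (20 * s ^ 2) + 1 / (20 * t ^ 2) < 1 / (s * t) := by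
  have hK : 0 < K := by linarith
  set c := 10 * s * t
  have hc : K < c := by nlinarith
  have hc' : c < 3 * K := by nlinarith
  rw [div_add_div _ _ hK.ne' (by positivity), div_add_div _ _ (by positivity) (by positivity),
    div_lt_div_iff₀ (by positivity) (by positivity)]
  -- with `c = 10 s t`: `(3 K - 10 s²) (3 K - 10 t²) > 0` and `(19 c - 3 K) (3 K - c) > 0`
  nlinarith [mul_pos hK (mul_pos (sub_pos.mpr hs') (sub_pos.mpr ht')),
    mul_pos hK (mul_pos (by linarith : 0 < 19 * c - 3 * K) (sub_pos.mpr hc'))]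

theorem Avoids.three_pow_lt_of_near {k : ℕ} {u y : ℝ} {p q : ℤ} (h : Avoids k u) (hq : 0 < q)
    (hqk : 10 * q ^ 2 ≤ 3 ^ (k + 1 + 1)) (hy : y ∈ Icc u (u + 1 / 3 ^ k))
    (hnear : |y - p / q| ≤ 1 / (20 * q ^ 2)) :
    (3 : ℝ) ^ (k + 1) < 10 * q ^ 2 ∧ (10 * q ^ 2 : ℝ) < 3 * 3 ^ (k + 1) := by
  have hlow : 3 ^ (k + 1) < 10 * q ^ 2 := by
    by_contra! hle
    exact (h p q hq hle y hy).not_ge hnear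
  have hup : 10 * q ^ 2 < 3 * 3 ^ (k + 1) :=
    (pow_succ' (3 : ℤ) (k + 1)) ▸ lt_of_le_of_ne hqk (ten_mul_sq_ne_three_pow q _)
  constructor <;> assumption_mod_cast

theorem Avoids.succ_or {k : ℕ} {u : ℝ} (h : Avoids k u) :
    Avoids (k + 1) u ∨ Avoids (k + 1) (u + 2 / 3 ^ (k + 1)) := by
  by_contra! hfail
  simp only [Avoids, not_forall, not_lt, exists_prop] at hfail
  obtain ⟨⟨p, q, hq, hqk, y, ⟨hy, hy'⟩, hnear⟩, ⟨p', q', hq', hq'k, y', ⟨hy₁, hy₁'⟩, hnear'⟩⟩ :=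
    hfail
  have hchild : (0 : ℝ) < 1 / 3 ^ (k + 1) := by positivity
  have hparent : (1 : ℝ) / 3 ^ k = 3 * (1 / 3 ^ (k + 1)) := by rw [pow_succ]; field_simp
  have htwo : (2 : ℝ) / 3 ^ (k + 1) = 2 * (1 / 3 ^ (k + 1)) := by ring
  have hthree : (3 : ℝ) / 3 ^ (k + 1) = 3 * (1 / 3 ^ (k + 1)) := by ring
  obtain ⟨hs, hs'⟩ := h.three_pow_lt_of_near hq hqk ⟨hy, by linarith⟩ hnear
  obtain ⟨ht, ht'⟩ := h.three_pow_lt_of_near hq' hq'k ⟨by linarith, by linarith⟩ hnear'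
  have hq0 : (0 : ℝ) < q := by exact_mod_cast hq
  have hq0' : (0 : ℝ) < q' := by exact_mod_cast hq'
  have hr : 1 / (20 * (q : ℝ) ^ 2) < 1 / 3 ^ (k + 1) / 2 := by
    rw [div_div]; exact one_div_lt_one_div_of_lt (by positivity) (by linarith)
  have hr' : 1 / (20 * (q' : ℝ) ^ 2) < 1 / 3 ^ (k + 1) / 2 := by
    rw [div_div]; exact one_div_lt_one_div_of_lt (by positivity) (by linarith)
  obtain ⟨hc, hc'⟩ := abs_le.mp hnear
  obtain ⟨hc₁, hc₁'⟩ := abs_le.mp hnear'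
  have hlt : (p / q : ℝ) < p' / q' := by linarith
  have hsep := one_div_mul_le_abs_div_sub_div hq hq' hlt.ne
  rw [abs_sub_comm, abs_of_pos (sub_pos.mpr hlt)] at hsep
  have := three_div_add_lt_one_div_mul hq0 hq0' hs hs' ht ht'
  linarith

open Classical in
noncomputable def childDigit (k : ℕ) (u : ℝ) : Bool := !decide (Avoids (k + 1) u)

theorem Avoids.succ_childDigit {k : ℕ} {u : ℝ} (h : Avoids k u) :
    Avoids (k + 1) (u + ternaryTerm (childDigit k u) k) := by
  by_cases hleft : Avoids (k + 1) u
  · simp [childDigit, ternaryTerm, hleft]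
  · simpa [childDigit, ternaryTerm, hleft] using h.succ_or.resolve_left hleft

noncomputable def goodLeftEnd : ℕ → ℝ
  | 0 => 0
  | k + 1 => goodLeftEnd k + ternaryTerm (childDigit k (goodLeftEnd k)) k

noncomputable def goodDigit (k : ℕ) : Bool := childDigit k (goodLeftEnd k)

theorem avoids_goodLeftEnd : ∀ k, Avoids k (goodLeftEnd k)
  | 0 => avoids_zero 0
  | k + 1 => (avoids_goodLeftEnd k).succ_childDigit

theorem goodLeftEnd_eq_sum (k : ℕ) :
    goodLeftEnd k = ∑ n ∈ Finset.range k, ternaryTerm (goodDigit n) n := by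
  induction k with
  | zero => rfl
  | succ k ih => rw [Finset.sum_range_succ, ← ih]; rfl

theorem badlyApproximable_ofDigits_goodDigit :
    BadlyApproximable (1 / 20) (ofDigits fun n => cond (goodDigit n) (2 : Fin 3) 0) := by
  intro p q hq
  obtain ⟨n, hn⟩ := pow_unbounded_of_one_lt (10 * q ^ 2) (by norm_num : (1 : ℤ) < 3)
  have hx := ofDigits_mem_Icc_sum (fun n => cond (goodDigit n) (2 : Fin 3) 0) n
  simp only [ofDigitsTerm_cond_two_zero, ← goodLeftEnd_eq_sum, Nat.cast_ofNat, ← one_div] at hx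
  rw [div_div]
  exact avoids_goodLeftEnd n p q hq (hn.le.trans (pow_le_pow_right₀ (by norm_num) n.le_succ)) _ hx

theorem stmt6 : (Fset 19 ∩ ternaryCantor).Nonempty := by
  set x := ofDigits fun n => cond (goodDigit n) (2 : Fin 3) 0
  have hbad : BadlyApproximable (1 / 20) x := badlyApproximable_ofDigits_goodDigit
  have hC : x ∈ ternaryCantor := ofDigits_cond_mem_ternaryCantor goodDigit
  have hirr : Irrational x := hbad.irrational (by norm_num)
  have hx : x ∈ Ioo 0 1 :=
    ⟨(ternaryCantor_subset_Icc hC).1.lt_of_ne' hirr.ne_zero,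
      (ternaryCantor_subset_Icc hC).2.lt_of_ne hirr.ne_one⟩
  refine ⟨x, ⟨hirr, hx, fun k => ?_⟩, hC⟩
  have hy := hbad.lt_gaussMap_iterate hirr hx k
  have hfloor : ⌊1 / gaussMap^[k] x⌋ < 20 :=
    Int.floor_lt.mpr (by rw [div_lt_iff₀ (by linarith)]; push_cast; linarith)
  omega
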